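/- arXiv:1406.2405 — 8 statements merged into one kernel-verified Lean document; each statement's English description precedes it below -/
import Mathlib

section
/- Suppose there exist α ∈ (0,1) and real numbers c_1, …, c_n such that for every i ∈ I: 1 − α c_i > 0 and −B_i + ((α − 1)/2)·σ_i² + Σ_{j ≠ i} q_{ij}·(c_i − c_j)/(1 − α c_i) < 0 (Assumption (i), used for asymptotic stability of the vertex x = 0). Let V(x,i) = (1 − α c_i)·x^α. Then there exists δ ∈ (0,1) such that for every i ∈ I and every x ∈ (0,δ), (L V)(x,i) < 0. -/
open Finset Real

/-- The switched replicator generator. -/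
noncomputable def switchedGen {n : ℕ} (A B σ : Fin n → ℝ) (q : Fin n → Fin n → ℝ)
    (V : ℝ → Fin n → ℝ) (x : ℝ) (i : Fin n) : ℝ :=
  x * (1 - x) * (-B i + (A i + B i) * x) * deriv (fun y => V y i) x
    + (σ i ^ 2 / 2) * x ^ 2 * (1 - x) ^ 2 * deriv (deriv (fun y => V y i)) x
    + ∑ j ∈ Finset.univ.filter (fun j => j ≠ i), q i j * (V x j - V x i)

/-!
On `x > 0` the generator applied to `V(x,i) = k_i x^α` factors as `x^α · g_i(x)`, where
`g_i = rpowGenFactor … i` is polynomial in `x`. With `k_i = 1 - α c_i`, the value `g_i(0)` is `α k_i` times the quantity of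
Assumption (i), hence negative; by continuity every `g_i` stays negative near `0`, and since
`I` is finite one `δ` serves all `i`.
-/

theorem deriv_const_mul_rpow (k p x : ℝ) :
    deriv (fun y : ℝ => k * y ^ p) x = k * (p * x ^ (p - 1)) := by
  rw [deriv_const_mul_field, Real.deriv_rpow_const]

theorem deriv_deriv_const_mul_rpow (k p x : ℝ) :
    deriv (deriv (fun y : ℝ => k * y ^ p)) x = k * (p * ((p - 1) * x ^ (p - 2))) := by
  rw [funext (deriv_const_mul_rpow k p), deriv_const_mul_field, deriv_const_mul_field,
    Real.deriv_rpow_const, sub_sub, one_add_one_eq_two]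

noncomputable def rpowGenFactor {n : ℕ} (A B σ : Fin n → ℝ) (q : Fin n → Fin n → ℝ)
    (k : Fin n → ℝ) (α : ℝ) (i : Fin n) (x : ℝ) : ℝ :=
  α * k i * ((1 - x) * (-B i + (A i + B i) * x) + (α - 1) / 2 * σ i ^ 2 * (1 - x) ^ 2)
    + ∑ j ∈ univ.filter (fun j => j ≠ i), q i j * (k j - k i)

theorem switchedGen_const_mul_rpow {n : ℕ} (A B σ : Fin n → ℝ) (q : Fin n → Fin n → ℝ)
    (k : Fin n → ℝ) (α : ℝ) (i : Fin n) {x : ℝ} (hx : 0 < x) :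
    switchedGen A B σ q (fun y i => k i * y ^ α) x i
      = x ^ α * rpowGenFactor A B σ q k α i x := by
  have hpow₁ : x ^ (α - 1) = x ^ α / x := by rw [rpow_sub hx, rpow_one]
  have hpow₂ : x ^ (α - 2) = x ^ α / x ^ 2 := by rw [rpow_sub hx, rpow_two]
  have hsum : ∑ j ∈ univ.filter (fun j => j ≠ i), q i j * (k j * x ^ α - k i * x ^ α)
      = x ^ α * ∑ j ∈ univ.filter (fun j => j ≠ i), q i j * (k j - k i) := by
    rw [mul_sum]
    exact sum_congr rfl fun j _ => by ring
  rw [switchedGen, deriv_deriv_const_mul_rpow, deriv_const_mul_rpow, hsum, hpow₁, hpow₂,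
    rpowGenFactor]
  field_simp

theorem rpowGenFactor_zero {n : ℕ} (A B σ : Fin n → ℝ) (q : Fin n → Fin n → ℝ)
    (c : Fin n → ℝ) (α : ℝ) (i : Fin n) (hc : 1 - α * c i ≠ 0) :
    rpowGenFactor A B σ q (fun j => 1 - α * c j) α i 0
      = α * (1 - α * c i) * (-B i + (α - 1) / 2 * σ i ^ 2
          + ∑ j ∈ univ.filter (fun j => j ≠ i), q i j * (c i - c j) / (1 - α * c i)) := by
  have hsum : ∑ j ∈ univ.filter (fun j => j ≠ i), q i j * ((1 - α * c j) - (1 - α * c i))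
      = α * (1 - α * c i)
          * ∑ j ∈ univ.filter (fun j => j ≠ i), q i j * (c i - c j) / (1 - α * c i) := by
    rw [mul_sum]
    refine sum_congr rfl fun j _ => ?_
    field_simp
    ring
  rw [rpowGenFactor, hsum]
  ring

theorem continuous_rpowGenFactor {n : ℕ} (A B σ : Fin n → ℝ) (q : Fin n → Fin n → ℝ)
    (k : Fin n → ℝ) (α : ℝ) (i : Fin n) : Continuous (rpowGenFactor A B σ q k α i) := by
  unfold rpowGenFactor
  fun_prop

theorem exists_Ioo_forall_neg_of_continuousAt {ι : Type*} [Finite ι] (f : ι → ℝ → ℝ)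
    (hf : ∀ i, ContinuousAt (f i) 0) (h0 : ∀ i, f i 0 < 0) :
    ∃ δ ∈ Set.Ioo (0 : ℝ) 1, ∀ i, ∀ x ∈ Set.Ioo (0 : ℝ) δ, f i x < 0 := by
  have hev : ∀ᶠ x in nhdsWithin 0 (Set.Ioi 0), ∀ i, f i x < 0 :=
    nhdsWithin_le_nhds <| Filter.eventually_all.2 fun i => (hf i).eventually_lt_const (h0 i)
  obtain ⟨u, hu, hsub⟩ := mem_nhdsGT_iff_exists_Ioo_subset.1 hev
  refine ⟨min u (1 / 2), ⟨lt_min hu (by norm_num), by linarith [min_le_right u (1 / 2)]⟩,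
    fun i x hx => hsub ⟨hx.1, hx.2.trans_le (min_le_left _ _)⟩ i⟩

theorem stmt_4_general {n : ℕ} (A B σ : Fin n → ℝ) (q : Fin n → Fin n → ℝ)
    (α : ℝ) (hα : α ∈ Set.Ioo (0 : ℝ) 1) (c : Fin n → ℝ)
    (hc : ∀ i, 1 - α * c i > 0)
    (hass : ∀ i : Fin n,
      -B i + ((α - 1) / 2) * σ i ^ 2
        + ∑ j ∈ Finset.univ.filter (fun j => j ≠ i),
            q i j * (c i - c j) / (1 - α * c i) < 0)
    (V : ℝ → Fin n → ℝ) (hV : V = fun x i => (1 - α * c i) * x ^ α) :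
    ∃ δ ∈ Set.Ioo (0 : ℝ) 1, ∀ i : Fin n, ∀ x ∈ Set.Ioo (0 : ℝ) δ,
      switchedGen A B σ q V x i < 0 := by
  set k : Fin n → ℝ := fun j => 1 - α * c j
  have hfactor_zero : ∀ i, rpowGenFactor A B σ q k α i 0 < 0 := fun i => by
    rw [rpowGenFactor_zero A B σ q c α i (hc i).ne']
    exact mul_neg_of_pos_of_neg (mul_pos hα.1 (hc i)) (hass i)
  obtain ⟨δ, hδ, hneg⟩ := exists_Ioo_forall_neg_of_continuousAt (rpowGenFactor A B σ q k α)
    (fun i => (continuous_rpowGenFactor A B σ q k α i).continuousAt) hfactor_zero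
  refine ⟨δ, hδ, fun i x hx => ?_⟩
  rw [hV, switchedGen_const_mul_rpow A B σ q k α i hx.1]
  exact mul_neg_of_pos_of_neg (rpow_pos_of_pos hx.1 α) (hneg i x hx)

theorem stmt_4 {n : ℕ} (hn : 0 < n) (A B σ : Fin n → ℝ) (q : Fin n → Fin n → ℝ)
    (hq : ∀ i j : Fin n, i ≠ j → 0 ≤ q i j)
    (α : ℝ) (hα : α ∈ Set.Ioo (0 : ℝ) 1) (c : Fin n → ℝ)
    (hc : ∀ i, 1 - α * c i > 0)
    (hass : ∀ i : Fin n,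
      -B i + ((α - 1) / 2) * σ i ^ 2
        + ∑ j ∈ Finset.univ.filter (fun j => j ≠ i),
            q i j * (c i - c j) / (1 - α * c i) < 0)
    (V : ℝ → Fin n → ℝ) (hV : V = fun x i => (1 - α * c i) * x ^ α) :
    ∃ δ ∈ Set.Ioo (0 : ℝ) 1, ∀ i : Fin n, ∀ x ∈ Set.Ioo (0 : ℝ) δ,
      switchedGen A B σ q V x i < 0 :=
  stmt_4_general A B σ q α hα c hc hass V hV
end

section
/- Suppose there exist α ∈ (0,1) and real numbers c_1, …, c_n such that for every i ∈ I: 1 + α c_i > 0 and A_i + ((−α + 1)/2)·σ_i² + Σ_{j ≠ i} q_{ij}·(c_i − c_j)/(1 + α c_i) > 0 (Assumption (iii), used for asymptotic stability of the vertex x = 1). Let V(x,i) = (1 + α c_i)·(1 − x)^α. Then there exists δ ∈ (0,1) such that for every i ∈ I and every x ∈ (1 − δ, 1), (L V)(x,i) < 0. -/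
open Finset Real

open Topology

/-!
For `V(x,i) = w_i (1 - x)^α` every term of `L V` carries the factor `(1 - x)^α`: the drift term
through `∂ₓV ∝ (1 - x)^(α-1)` against `1 - x`, the diffusion term through
`∂ₓ²V ∝ (1 - x)^(α-2)` against `(1 - x)^2`, and the switching term directly. Hence
`L V = (1 - x)^α · g_i(x)` with `g_i = rpowCoeff … w i` a polynomial in `x`, and for
`w_i = 1 + α c_i` the value `g_i(1)` is `-α w_i` times the quantity of Assumption (iii).
So `g_i(1) < 0`, and by continuity `g_i < 0` on a left neighbourhood of `1`.
-/

theorem hasDerivAt_one_sub_rpow (β : ℝ) {x : ℝ} (hx : x < 1) :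
    HasDerivAt (fun y : ℝ => (1 - y) ^ β) (-(β * (1 - x) ^ (β - 1))) x := by
  convert ((hasDerivAt_id' x).const_sub 1).rpow_const (p := β) (Or.inl (by linarith)) using 1
  ring

theorem deriv_one_sub_rpow (β : ℝ) {x : ℝ} (hx : x < 1) :
    deriv (fun y : ℝ => (1 - y) ^ β) x = -(β * (1 - x) ^ (β - 1)) :=
  (hasDerivAt_one_sub_rpow β hx).deriv

theorem deriv_deriv_one_sub_rpow (β : ℝ) {x : ℝ} (hx : x < 1) :
    deriv (deriv fun y : ℝ => (1 - y) ^ β) x = β * (β - 1) * (1 - x) ^ (β - 2) := by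
  have hloc : deriv (fun y : ℝ => (1 - y) ^ β) =ᶠ[𝓝 x] fun y => -(β * (1 - y) ^ (β - 1)) :=
    Filter.eventually_of_mem (Iio_mem_nhds hx) fun y hy => deriv_one_sub_rpow β hy
  have hderiv : HasDerivAt (fun y => -(β * (1 - y) ^ (β - 1)))
      (β * (β - 1) * (1 - x) ^ (β - 2)) x := by
    refine ((hasDerivAt_one_sub_rpow (β - 1) hx).const_mul β).neg.congr_deriv ?_
    rw [show β - 1 - 1 = β - 2 by ring]
    ring
  rw [hloc.deriv_eq, hderiv.deriv]

noncomputable def rpowCoeff {n : ℕ} (A B σ : Fin n → ℝ) (q : Fin n → Fin n → ℝ) (α : ℝ)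
    (w : Fin n → ℝ) (i : Fin n) (x : ℝ) : ℝ :=
  α * (-(w i * x * (-B i + (A i + B i) * x)) + σ i ^ 2 / 2 * w i * (α - 1) * x ^ 2)
    + ∑ j ∈ univ.filter (fun j => j ≠ i), q i j * (w j - w i)

theorem switchedGen_weighted_rpow {n : ℕ} (A B σ : Fin n → ℝ) (q : Fin n → Fin n → ℝ)
    (α : ℝ) (w : Fin n → ℝ) (i : Fin n) {x : ℝ} (hx : x < 1) :
    switchedGen A B σ q (fun x i => w i * (1 - x) ^ α) x i
      = (1 - x) ^ α * rpowCoeff A B σ q α w i x := by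
  have hpos : 0 < 1 - x := by linarith
  have hpow₁ : (1 - x) ^ (α - 1) = (1 - x) ^ α / (1 - x) := by
    rw [rpow_sub hpos, rpow_one]
  have hpow₂ : (1 - x) ^ (α - 2) = (1 - x) ^ α / (1 - x) ^ 2 := by
    rw [rpow_sub hpos, rpow_two]
  simp only [switchedGen, rpowCoeff, deriv_const_mul_field', deriv_one_sub_rpow α hx,
    deriv_deriv_one_sub_rpow α hx, hpow₁, hpow₂, mul_add, mul_sum]
  congr 1
  · field_simp
  · exact sum_congr rfl fun j _ => by ring

theorem rpowCoeff_one {n : ℕ} (A B σ : Fin n → ℝ) (q : Fin n → Fin n → ℝ) {α : ℝ}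
    (c : Fin n → ℝ) (i : Fin n) (hw : 1 + α * c i ≠ 0) :
    rpowCoeff A B σ q α (fun j => 1 + α * c j) i 1
      = -(α * (1 + α * c i)) * (A i + ((-α + 1) / 2) * σ i ^ 2
          + ∑ j ∈ univ.filter (fun j => j ≠ i), q i j * (c i - c j) / (1 + α * c i)) := by
  have hsum : ∑ j ∈ univ.filter (fun j => j ≠ i), q i j * ((1 + α * c j) - (1 + α * c i))
      = -(α * (1 + α * c i)) * ∑ j ∈ univ.filter (fun j => j ≠ i),
          q i j * (c i - c j) / (1 + α * c i) := by
    rw [mul_sum]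
    refine sum_congr rfl fun j _ => ?_
    field_simp
    ring
  rw [rpowCoeff, hsum]
  ring

theorem continuous_rpowCoeff {n : ℕ} (A B σ : Fin n → ℝ) (q : Fin n → Fin n → ℝ) (α : ℝ)
    (w : Fin n → ℝ) (i : Fin n) : Continuous (rpowCoeff A B σ q α w i) := by
  unfold rpowCoeff
  fun_prop

theorem exists_Ioo_forall_of_eventually_nhds {P : ℝ → Prop} {a : ℝ}
    (hP : ∀ᶠ x in 𝓝 a, P x) : ∃ δ ∈ Set.Ioo (0 : ℝ) 1, ∀ x ∈ Set.Ioo (a - δ) a, P x := by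
  obtain ⟨ε, hε, hball⟩ := Metric.eventually_nhds_iff.mp hP
  refine ⟨min ε (1 / 2), ⟨by positivity, by linarith [min_le_right ε (1 / 2)]⟩, ?_⟩
  rintro x ⟨hxl, hxr⟩
  apply hball
  rw [Real.dist_eq, abs_of_neg (by linarith)]
  linarith [min_le_left ε (1 / 2)]

theorem stmt_6_general {n : ℕ} (A B σ : Fin n → ℝ) (q : Fin n → Fin n → ℝ)
    (α : ℝ) (hα : α ∈ Set.Ioo (0 : ℝ) 1) (c : Fin n → ℝ)
    (hc : ∀ i, 1 + α * c i > 0)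
    (hass : ∀ i : Fin n,
      A i + ((-α + 1) / 2) * σ i ^ 2
        + ∑ j ∈ Finset.univ.filter (fun j => j ≠ i),
            q i j * (c i - c j) / (1 + α * c i) > 0)
    (V : ℝ → Fin n → ℝ) (hV : V = fun x i => (1 + α * c i) * (1 - x) ^ α) :
    ∃ δ ∈ Set.Ioo (0 : ℝ) 1, ∀ i : Fin n, ∀ x ∈ Set.Ioo (1 - δ) 1,
      switchedGen A B σ q V x i < 0 := by
  subst hV
  have hg_one : ∀ i, rpowCoeff A B σ q α (fun j => 1 + α * c j) i 1 < 0 := fun i => by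
    rw [rpowCoeff_one A B σ q c i (hc i).ne']
    exact mul_neg_of_neg_of_pos (neg_neg_of_pos (mul_pos hα.1 (hc i))) (hass i)
  have hg_near :
      ∀ᶠ x in 𝓝 (1 : ℝ), ∀ i, rpowCoeff A B σ q α (fun j => 1 + α * c j) i x < 0 :=
    Filter.eventually_all.mpr fun i =>
      (continuous_rpowCoeff A B σ q α _ i).continuousAt.eventually_lt_const (hg_one i)
  obtain ⟨δ, hδ, hneg⟩ := exists_Ioo_forall_of_eventually_nhds hg_near
  refine ⟨δ, hδ, fun i x hx => ?_⟩
  rw [switchedGen_weighted_rpow A B σ q α _ i hx.2]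
  exact mul_neg_of_pos_of_neg (rpow_pos_of_pos (by linarith [hx.2]) α) (hneg x hx i)

theorem stmt_6 {n : ℕ} (hn : 0 < n) (A B σ : Fin n → ℝ) (q : Fin n → Fin n → ℝ)
    (hq : ∀ i j : Fin n, i ≠ j → 0 ≤ q i j)
    (α : ℝ) (hα : α ∈ Set.Ioo (0 : ℝ) 1) (c : Fin n → ℝ)
    (hc : ∀ i, 1 + α * c i > 0)
    (hass : ∀ i : Fin n,
      A i + ((-α + 1) / 2) * σ i ^ 2
        + ∑ j ∈ Finset.univ.filter (fun j => j ≠ i),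
            q i j * (c i - c j) / (1 + α * c i) > 0)
    (V : ℝ → Fin n → ℝ) (hV : V = fun x i => (1 + α * c i) * (1 - x) ^ α) :
    ∃ δ ∈ Set.Ioo (0 : ℝ) 1, ∀ i : Fin n, ∀ x ∈ Set.Ioo (1 - δ) 1,
      switchedGen A B σ q V x i < 0 :=
  stmt_6_general A B σ q α hα c hc hass V hV
end

section
/- Let 0 < x₀ < x₁ < 1 and suppose σ_i ≠ 0 for every i ∈ I. Then there exist γ > 0 and K > 0 such that for every i ∈ I and every x ∈ [x₀, x₁], the function V(x,i) = e^γ − e^{γx} (which does not depend on i) satisfies (L V)(x,i) = −γ e^{γx} x(1 − x)·[ −B_i + (A_i + B_i)x + γ·(σ_i²/2)·x(1 − x) ] ≤ −K. (This is the key estimate in the proof that the switched stochastic replicator dynamic exits any strict subinterval of (0,1) in finite expected time.) -/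
open Finset Real

/-! The Lyapunov function does not depend on the environment, so the switching term of the
generator vanishes. On `[x₀, x₁]` the concave factor `x (1 - x)` is at least its smaller endpoint
value, so a single `γ`, large enough for the finitely many environments, makes the diffusion term
`γ σᵢ² / 2 · x (1 - x)` exceed the bounded drift by at least `1`. -/

lemma deriv_const_sub_exp_mul (γ : ℝ) :
    deriv (fun y => exp γ - exp (γ * y)) = fun y => -(γ * exp (γ * y)) := by
  funext y
  simpa [mul_comm] using
    (((hasDerivAt_id y).const_mul γ).exp.const_sub (exp γ)).deriv

lemma deriv_deriv_const_sub_exp_mul (γ : ℝ) :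
    deriv (deriv (fun y => exp γ - exp (γ * y))) = fun y => -(γ * (γ * exp (γ * y))) := by
  funext y
  rw [deriv_const_sub_exp_mul]
  simpa [mul_comm, mul_left_comm] using
    (((hasDerivAt_id y).const_mul γ).exp.const_mul γ).neg.deriv

lemma switchedGen_const_in_env {n : ℕ} (A B σ : Fin n → ℝ) (q : Fin n → Fin n → ℝ)
    (f : ℝ → ℝ) (x : ℝ) (i : Fin n) :
    switchedGen A B σ q (fun y _ => f y) x i =
      x * (1 - x) * (-B i + (A i + B i) * x) * deriv f x
        + (σ i ^ 2 / 2) * x ^ 2 * (1 - x) ^ 2 * deriv (deriv f) x := by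
  simp [switchedGen]

lemma switchedGen_const_sub_exp_mul {n : ℕ} (A B σ : Fin n → ℝ) (q : Fin n → Fin n → ℝ)
    (γ x : ℝ) (i : Fin n) :
    switchedGen A B σ q (fun y _ => exp γ - exp (γ * y)) x i =
      -γ * exp (γ * x) * (x * (1 - x)) *
        (-B i + (A i + B i) * x + γ * (σ i ^ 2 / 2) * x * (1 - x)) := by
  rw [switchedGen_const_in_env, deriv_deriv_const_sub_exp_mul, deriv_const_sub_exp_mul]
  ring

lemma min_le_mul_one_sub_of_mem_Icc {x₀ x₁ x : ℝ} (hx : x ∈ Set.Icc x₀ x₁) :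
    min (x₀ * (1 - x₀)) (x₁ * (1 - x₁)) ≤ x * (1 - x) := by
  obtain ⟨h₀, h₁⟩ := hx
  rcases le_total x (1 - x₀) with h | h
  · exact (min_le_left _ _).trans (by nlinarith)
  · exact (min_le_right _ _).trans (by nlinarith)

lemma neg_abs_add_abs_le_affine {a b x : ℝ} (hx : x ∈ Set.Icc (0 : ℝ) 1) :
    -(|a| + |b|) ≤ a + b * x := by
  have hbx : -|b| ≤ b * x := by
    calc -|b| ≤ -|b| * x := by nlinarith [abs_nonneg b, hx.1, hx.2]
      _ ≤ b * x := mul_le_mul_of_nonneg_right (neg_abs_le b) hx.1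
  linarith [neg_abs_le a]

lemma one_le_affine_add_mul_of_le {a b s c γ x : ℝ} (hx : x ∈ Set.Icc (0 : ℝ) 1) (hγ : 0 ≤ γ)
    (hs : 0 ≤ s) (hcx : c ≤ x * (1 - x)) (hγsc : |a| + |b| + 1 ≤ γ * (s * c)) :
    1 ≤ a + b * x + γ * s * x * (1 - x) := by
  have hdrift := neg_abs_add_abs_le_affine (a := a) (b := b) hx
  have hdiffusion : γ * (s * c) ≤ γ * s * (x * (1 - x)) := by
    rw [← mul_assoc]; gcongr
  nlinarith

lemma exists_pos_forall_le_mul {ι : Type*} [Finite ι] (a b : ι → ℝ) (hb : ∀ i, 0 < b i) :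
    ∃ γ > 0, ∀ i, a i ≤ γ * b i := by
  obtain ⟨M, hM⟩ := Finite.exists_le fun i => a i / b i
  refine ⟨max M 1, by positivity, fun i => ?_⟩
  rw [← div_le_iff₀ (hb i)]
  exact (hM i).trans (le_max_left _ _)

theorem stmt_8_general {n : ℕ} (A B σ : Fin n → ℝ) (q : Fin n → Fin n → ℝ)
    (x₀ x₁ : ℝ) (hx₀ : 0 < x₀) (hx : x₀ < x₁) (hx₁ : x₁ < 1)
    (hσ : ∀ i : Fin n, σ i ≠ 0) :
    ∃ γ > (0 : ℝ), ∃ K > (0 : ℝ), ∀ i : Fin n, ∀ x ∈ Set.Icc x₀ x₁,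
      switchedGen A B σ q (fun y _ => Real.exp γ - Real.exp (γ * y)) x i =
        -γ * Real.exp (γ * x) * (x * (1 - x)) *
          (-B i + (A i + B i) * x + γ * (σ i ^ 2 / 2) * x * (1 - x)) ∧
      switchedGen A B σ q (fun y _ => Real.exp γ - Real.exp (γ * y)) x i ≤ -K := by
  set c := min (x₀ * (1 - x₀)) (x₁ * (1 - x₁))
  have hc : 0 < c := lt_min (by nlinarith) (by nlinarith)
  obtain ⟨γ, hγ, hγi⟩ := exists_pos_forall_le_mul (fun i => |B i| + |A i + B i| + 1)
    (fun i => σ i ^ 2 / 2 * c) fun i => by have := hσ i; positivity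
  refine ⟨γ, hγ, γ * exp (γ * x₀) * c, by positivity, fun i x hxI =>
    ⟨switchedGen_const_sub_exp_mul A B σ q γ x i, ?_⟩⟩
  rw [switchedGen_const_sub_exp_mul]
  have hcx : c ≤ x * (1 - x) := min_le_mul_one_sub_of_mem_Icc hxI
  have hbracket : 1 ≤ -B i + (A i + B i) * x + γ * (σ i ^ 2 / 2) * x * (1 - x) :=
    one_le_affine_add_mul_of_le ⟨by linarith [hxI.1], by linarith [hxI.2]⟩ hγ.le
      (by positivity) hcx (by simpa only [abs_neg] using hγi i)
  have hexp : exp (γ * x₀) ≤ exp (γ * x) := exp_le_exp.mpr (by nlinarith [hxI.1])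
  have hlower : γ * exp (γ * x₀) * c ≤ γ * exp (γ * x) * (x * (1 - x)) := by gcongr
  have hK : 0 ≤ γ * exp (γ * x₀) * c := by positivity
  calc -γ * exp (γ * x) * (x * (1 - x)) * (-B i + (A i + B i) * x + γ * (σ i ^ 2 / 2) * x * (1 - x))
      = -(γ * exp (γ * x) * (x * (1 - x)) *
          (-B i + (A i + B i) * x + γ * (σ i ^ 2 / 2) * x * (1 - x))) := by ring
    _ ≤ -(γ * exp (γ * x₀) * c * 1) :=
        neg_le_neg (mul_le_mul hlower hbracket zero_le_one (hK.trans hlower))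
    _ = -(γ * exp (γ * x₀) * c) := by rw [mul_one]

theorem stmt_8 {n : ℕ} (hn : 0 < n) (A B σ : Fin n → ℝ) (q : Fin n → Fin n → ℝ)
    (hq : ∀ i j : Fin n, i ≠ j → 0 ≤ q i j)
    (x₀ x₁ : ℝ) (hx₀ : 0 < x₀) (hx : x₀ < x₁) (hx₁ : x₁ < 1)
    (hσ : ∀ i : Fin n, σ i ≠ 0) :
    ∃ γ > (0 : ℝ), ∃ K > (0 : ℝ), ∀ i : Fin n, ∀ x ∈ Set.Icc x₀ x₁,
      switchedGen A B σ q (fun y _ => Real.exp γ - Real.exp (γ * y)) x i =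
        -γ * Real.exp (γ * x) * (x * (1 - x)) *
          (-B i + (A i + B i) * x + γ * (σ i ^ 2 / 2) * x * (1 - x)) ∧
      switchedGen A B σ q (fun y _ => Real.exp γ - Real.exp (γ * y)) x i ≤ -K :=
  stmt_8_general A B σ q x₀ x₁ hx₀ hx hx₁ hσ
end

section
/- If a > c and d < b, then s(t) → 1 as t → ∞ (strategy 1 is dominant: the vertex s = 1 is globally attracting from the interior). -/
open Set Filter Topology Real

theorem eq_mul_exp_integral_of_hasDerivAt_mul {y k : ℝ → ℝ} (hk : Continuous k)
    (hy : ∀ t ≥ 0, HasDerivAt y (k t * y t) t) {t : ℝ} (ht : 0 ≤ t) :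
    y t = y 0 * exp (∫ τ in (0 : ℝ)..t, k τ) := by
  set w : ℝ → ℝ := fun u ↦ y u * exp (-∫ τ in (0 : ℝ)..u, k τ)
  have hw : ∀ u ≥ 0, HasDerivAt w 0 u := fun u hu ↦ by
    refine ((hy u hu).mul (hk.integral_hasStrictDerivAt 0 u).hasDerivAt.neg.exp).congr_deriv ?_
    simp only [Pi.neg_apply]; ring
  have hw_const := constant_of_has_deriv_right_zero (a := 0) (b := t)
    (fun u hu ↦ (hw u hu.1).continuousAt.continuousWithinAt)
    (fun u hu ↦ (hw u hu.1).hasDerivWithinAt) t ⟨ht, le_rfl⟩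
  simp only [w, intervalIntegral.integral_same, neg_zero, exp_zero, mul_one] at hw_const
  rw [← hw_const, mul_assoc, ← exp_add, neg_add_cancel, exp_zero, mul_one]

theorem add_mul_le_of_le_hasDerivAt {f f' : ℝ → ℝ} {δ : ℝ}
    (hf : ∀ t ≥ 0, HasDerivAt f (f' t) t) (hδ : ∀ t ≥ 0, δ ≤ f' t) {t : ℝ} (ht : 0 ≤ t) :
    f 0 + δ * t ≤ f t := by
  have key := (convex_Ici (0 : ℝ)).mul_sub_le_image_sub_of_le_deriv (f := f) (C := δ)
    (fun u hu ↦ (hf u hu).continuousAt.continuousWithinAt)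
    (fun u hu ↦ (hf u (interior_subset hu)).differentiableAt.differentiableWithinAt)
    (fun u hu ↦ (hf u (interior_subset hu)).deriv ▸ hδ u (interior_subset hu))
    0 self_mem_Ici t ht ht
  linarith

/-- The right-hand side of the replicator equation, with `A = a - c` and `B = b - d`. -/
def replicatorField (A B x : ℝ) : ℝ := x * (1 - x) * (A * x + B * (1 - x))

theorem continuous_replicatorField (A B : ℝ) : Continuous (replicatorField A B) := by
  unfold replicatorField; fun_prop

theorem replicatorField_pos {A B x : ℝ} (hA : 0 < A) (hB : 0 < B) (hx : x ∈ Ioo 0 1) :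
    0 < replicatorField A B x := by
  obtain ⟨hx0, hx1⟩ := hx
  have : 0 < 1 - x := sub_pos.mpr hx1
  unfold replicatorField; positivity

section Replicator

variable {A B : ℝ} {s : ℝ → ℝ}

/-- Both `s` and `1 - s` solve linear equations `y' = k y`, so neither can reach `0`. -/
theorem replicator_mem_Ioo (hsc : Continuous s)
    (hs : ∀ t ≥ 0, HasDerivAt s (replicatorField A B (s t)) t)
    (h0 : s 0 ∈ Ioo 0 1) {t : ℝ} (ht : 0 ≤ t) : s t ∈ Ioo 0 1 := by
  have hs_eq := eq_mul_exp_integral_of_hasDerivAt_mul (y := s)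
    (k := fun u ↦ (1 - s u) * (A * s u + B * (1 - s u))) (by fun_prop)
    (fun u hu ↦ (hs u hu).congr_deriv (by simp only [replicatorField]; ring)) ht
  have hs_eq' := eq_mul_exp_integral_of_hasDerivAt_mul (y := fun u ↦ 1 - s u)
    (k := fun u ↦ -(s u * (A * s u + B * (1 - s u)))) (by fun_prop)
    (fun u hu ↦ ((hs u hu).const_sub 1).congr_deriv (by simp only [replicatorField]; ring)) ht
  have h1 : 0 < 1 - s t := hs_eq' ▸ mul_pos (sub_pos.mpr h0.2) (exp_pos _)
  exact ⟨hs_eq ▸ mul_pos h0.1 (exp_pos _), by linarith⟩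

theorem replicator_strictMonoOn (hA : 0 < A) (hB : 0 < B) (hsc : Continuous s)
    (hs : ∀ t ≥ 0, HasDerivAt s (replicatorField A B (s t)) t) (h0 : s 0 ∈ Ioo 0 1) :
    StrictMonoOn s (Ici 0) := by
  refine strictMonoOn_of_deriv_pos (convex_Ici 0) hsc.continuousOn fun t ht ↦ ?_
  rw [interior_Ici] at ht
  rw [(hs t ht.le).deriv]
  exact replicatorField_pos hA hB (replicator_mem_Ioo hsc hs h0 ht.le)

/-- Otherwise `s` stays in a compact subinterval of `(0, 1)`, where the field is bounded below by
some `δ > 0`, so `s` would grow at least linearly. -/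
theorem replicator_exists_gt (hA : 0 < A) (hB : 0 < B) (hsc : Continuous s)
    (hs : ∀ t ≥ 0, HasDerivAt s (replicatorField A B (s t)) t) (h0 : s 0 ∈ Ioo 0 1)
    {a : ℝ} (ha : a < 1) : ∃ T ≥ 0, a < s T := by
  by_contra! hle
  have hmem : ∀ t ≥ 0, s t ∈ Icc (s 0) a := fun t ht ↦
    ⟨(replicator_strictMonoOn hA hB hsc hs h0).monotoneOn self_mem_Ici ht ht, hle t ht⟩
  obtain ⟨δ, hδ, hδ_le⟩ := isCompact_Icc.exists_forall_le'
    (continuous_replicatorField A B).continuousOn (a := 0)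
    fun x hx ↦ replicatorField_pos hA hB ⟨h0.1.trans_le hx.1, hx.2.trans_lt ha⟩
  have hs0a : s 0 ≤ a := (hmem 0 le_rfl).2
  have hT : 0 ≤ (a - s 0) / δ + 1 := by
    have := div_nonneg (sub_nonneg.mpr hs0a) hδ.le
    linarith
  have hgrowth := add_mul_le_of_le_hasDerivAt hs (fun t ht ↦ hδ_le _ (hmem t ht)) hT
  have : δ * ((a - s 0) / δ + 1) = a - s 0 + δ := by field_simp
  linarith [hle _ hT]

end Replicator

theorem stmt_10 (a b c d : ℝ) (hac : a > c) (hdb : d < b)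
    (s : ℝ → ℝ) (hs : Differentiable ℝ s)
    (hode : ∀ t ≥ (0 : ℝ), deriv s t =
      s t * (1 - s t) * ((a - c) * s t + (b - d) * (1 - s t)))
    (h0 : s 0 ∈ Set.Ioo (0 : ℝ) 1) :
    Filter.Tendsto s Filter.atTop (nhds 1) := by
  have hA : 0 < a - c := sub_pos.mpr hac
  have hB : 0 < b - d := sub_pos.mpr hdb
  have hsd : ∀ t ≥ 0, HasDerivAt s (replicatorField (a - c) (b - d) (s t)) t :=
    fun t ht ↦ (hs t).hasDerivAt.congr_deriv (hode t ht)
  refine tendsto_order.2 ⟨fun l hl ↦ ?_, fun u hu ↦ ?_⟩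
  · obtain ⟨T, hT, hlT⟩ := replicator_exists_gt hA hB hs.continuous hsd h0 hl
    filter_upwards [eventually_ge_atTop T] with t ht
    exact hlT.trans_le <| (replicator_strictMonoOn hA hB hs.continuous hsd h0).monotoneOn
      hT (hT.trans ht) ht
  · filter_upwards [eventually_ge_atTop 0] with t ht
    exact (replicator_mem_Ioo hs.continuous hsd h0 ht).2.trans hu
end

section
/- Suppose a > c and d > b (coordination game), and let s* = (d − b)/((a − c) + (d − b)), which lies in (0,1). If s(0) > s*, then s(t) → 1 as t → ∞. -/
/-!
Write the dynamic as `s' = (1 - s) * G s` with `G y = y * ((a - c) * y + (b - d) * (1 - y))`,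
so that `1 - s` decays at the rate `G s`. Above `s*` the payoff gap is positive and increasing,
hence on `[s 0, 1)` the rate lies between `G (s 0) > 0` and `a - c`. The fencing theorem for
differential inequalities then traps `s` between the curves `1 - (1 - s 0) * exp (-μ * t)` for
`μ = G (s 0) / 2` and `μ = a - c`; both tend to `1`. Since the barriers are strict, no uniqueness
theorem is needed to keep `s` away from the equilibria `s*` and `1`.
-/

open Set Filter Real Topology

noncomputable def expBarrier (y₀ μ t : ℝ) : ℝ := 1 - (1 - y₀) * exp (-μ * t)

lemma hasDerivAt_expBarrier (y₀ μ t : ℝ) :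
    HasDerivAt (expBarrier y₀ μ) (μ * (1 - expBarrier y₀ μ t)) t := by
  have := ((((hasDerivAt_id' t).const_mul (-μ)).exp).const_mul (1 - y₀)).const_sub 1
  exact this.congr_deriv (by unfold expBarrier; ring)

lemma expBarrier_mem_Ico {y₀ μ t : ℝ} (hy₀ : y₀ < 1) (hμ : 0 ≤ μ) (ht : 0 ≤ t) :
    expBarrier y₀ μ t ∈ Ico y₀ 1 := by
  have hexp : exp (-μ * t) ≤ 1 := exp_le_one_iff.mpr (by nlinarith)
  constructor <;> simp only [expBarrier] <;> nlinarith [exp_pos (-μ * t)]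

lemma tendsto_expBarrier (y₀ : ℝ) {μ : ℝ} (hμ : 0 < μ) :
    Tendsto (expBarrier y₀ μ) atTop (𝓝 1) := by
  have : Tendsto (fun t => exp (-μ * t)) atTop (𝓝 0) :=
    tendsto_exp_atBot.comp (tendsto_id.const_mul_atTop_of_neg (neg_lt_zero.mpr hμ))
  unfold expBarrier
  simpa using (this.const_mul (1 - y₀)).const_sub 1

section Barrier

variable {s G : ℝ → ℝ} {μ : ℝ}

lemma expBarrier_le_of_lt_decayRate (hs : ∀ t ≥ 0, HasDerivAt s ((1 - s t) * G (s t)) t)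
    (h1 : s 0 < 1) (hμ : 0 ≤ μ) (hG : ∀ y ∈ Ico (s 0) 1, μ < G y) :
    ∀ t ≥ 0, expBarrier (s 0) μ t ≤ s t := by
  intro t ht
  refine image_le_of_deriv_right_lt_deriv_boundary' (a := 0) (b := t)
    (fun x _ => (hasDerivAt_expBarrier _ μ x).continuousAt.continuousWithinAt)
    (fun x _ => (hasDerivAt_expBarrier _ μ x).hasDerivWithinAt) (by simp [expBarrier])
    (fun x hx => (hs x hx.1).continuousAt.continuousWithinAt)
    (fun x hx => (hs x hx.1).hasDerivWithinAt) ?_ ⟨ht, le_rfl⟩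
  intro x hx hcontact
  obtain ⟨hlo, hhi⟩ := expBarrier_mem_Ico h1 hμ hx.1
  rw [← hcontact]
  exact mul_lt_mul_of_pos_left (hG _ ⟨hlo, hhi⟩) (sub_pos.mpr hhi) |>.trans_eq' (mul_comm _ _)

lemma le_expBarrier_of_decayRate_lt (hs : ∀ t ≥ 0, HasDerivAt s ((1 - s t) * G (s t)) t)
    (h1 : s 0 < 1) (hμ : 0 ≤ μ) (hG : ∀ y ∈ Ico (s 0) 1, G y < μ) :
    ∀ t ≥ 0, s t ≤ expBarrier (s 0) μ t := by
  intro t ht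
  refine image_le_of_deriv_right_lt_deriv_boundary (a := 0) (b := t)
    (fun x hx => (hs x hx.1).continuousAt.continuousWithinAt)
    (fun x hx => (hs x hx.1).hasDerivWithinAt) (by simp [expBarrier])
    (hasDerivAt_expBarrier _ μ) ?_ ⟨ht, le_rfl⟩
  intro x hx hcontact
  obtain ⟨hlo, hhi⟩ := expBarrier_mem_Ico h1 hμ hx.1
  rw [hcontact, mul_comm μ]
  exact mul_lt_mul_of_pos_left (hG _ ⟨hlo, hhi⟩) (sub_pos.mpr hhi)

end Barrier

section Replicator

variable {a b c d : ℝ}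

def payoffGap (a b c d y : ℝ) : ℝ := (a - c) * y + (b - d) * (1 - y)

lemma payoffGap_pos_of_lt (hK : 0 < (a - c) + (d - b)) {y : ℝ}
    (hy : (d - b) / ((a - c) + (d - b)) < y) : 0 < payoffGap a b c d y := by
  have := (div_lt_iff₀ hK).mp hy
  unfold payoffGap
  linarith

lemma payoffGap_mono (hK : 0 < (a - c) + (d - b)) : Monotone (payoffGap a b c d) := by
  intro x y hxy
  unfold payoffGap
  nlinarith

lemma mul_payoffGap_mem_Ico (hK : 0 < (a - c) + (d - b)) {y₀ y : ℝ} (hy₀ : 0 < y₀)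
    (hgap : 0 < payoffGap a b c d y₀) (hy : y ∈ Ico y₀ 1) :
    y₀ * payoffGap a b c d y₀ ≤ y * payoffGap a b c d y ∧ y * payoffGap a b c d y < a - c := by
  have hmono := payoffGap_mono hK hy.1
  have hle : payoffGap a b c d y ≤ a - c := by
    simpa [payoffGap] using payoffGap_mono hK hy.2.le
  constructor <;> nlinarith [hy.1, hy.2]

end Replicator

theorem stmt_12 (a b c d : ℝ) (hac : a > c) (hdb : d > b)
    (s : ℝ → ℝ) (hs : Differentiable ℝ s)
    (hode : ∀ t ≥ (0 : ℝ), deriv s t =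
      s t * (1 - s t) * ((a - c) * s t + (b - d) * (1 - s t)))
    (h0 : s 0 ∈ Set.Ioo (0 : ℝ) 1)
    (sstar : ℝ) (hsstar : sstar = (d - b) / ((a - c) + (d - b)))
    (hinit : s 0 > sstar) :
    sstar ∈ Set.Ioo (0 : ℝ) 1 ∧ Filter.Tendsto s Filter.atTop (nhds 1) := by
  have hK : 0 < (a - c) + (d - b) := by linarith
  subst hsstar
  refine ⟨⟨div_pos (by linarith) hK, (div_lt_one hK).mpr (by linarith)⟩, ?_⟩
  set G : ℝ → ℝ := fun y => y * payoffGap a b c d y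
  have hsG : ∀ t ≥ 0, HasDerivAt s ((1 - s t) * G (s t)) t := fun t ht =>
    (hs t).hasDerivAt.congr_deriv (by rw [hode t ht]; simp only [G, payoffGap]; ring)
  have hgap := payoffGap_pos_of_lt hK hinit
  have hG0 : 0 < G (s 0) := mul_pos h0.1 hgap
  have hlower := expBarrier_le_of_lt_decayRate hsG h0.2 (half_pos hG0).le fun y hy =>
    (half_lt_self hG0).trans_le (mul_payoffGap_mem_Ico hK h0.1 hgap hy).1
  have hupper := le_expBarrier_of_decayRate_lt hsG h0.2 (sub_pos.mpr hac).le fun y hy =>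
    (mul_payoffGap_mem_Ico hK h0.1 hgap hy).2
  refine tendsto_of_tendsto_of_tendsto_of_le_of_le' (tendsto_expBarrier (s 0) (half_pos hG0))
    tendsto_const_nhds ?_ ?_
  · filter_upwards [eventually_ge_atTop 0] with t ht using hlower t ht
  · filter_upwards [eventually_ge_atTop 0] with t ht
    exact (hupper t ht).trans (expBarrier_mem_Ico h0.2 (sub_pos.mpr hac).le ht).2.le
end

section
/- Suppose a > c and d > b (coordination game), and let s* = (d − b)/((a − c) + (d − b)), which lies in (0,1). If s(0) < s*, then s(t) → 0 as t → ∞. -/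
/-!
With `K = (a - c) + (d - b) > 0` the replicator equation reads `s' = K s (1 - s) (s - s*)`.
Both `s` and `s* - s` solve linear equations `y' = h(t) y` with continuous `h`, so they stay
positive; hence `s` is trapped in `(0, s*)`, where `s' < 0`. If `s` stayed above some `ε > 0`,
then `s'` would be bounded away from zero on `[ε, s 0]` and `s` would decrease linearly,
eventually becoming negative.
-/

open Set Filter Topology

theorem eq_mul_exp_integral_of_deriv_eq_mul {y h : ℝ → ℝ} (hy : Differentiable ℝ y)
    (hh : Continuous h) (hder : ∀ t ≥ 0, deriv y t = h t * y t) {t : ℝ} (ht : 0 ≤ t) :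
    y t = y 0 * Real.exp (∫ x in (0 : ℝ)..t, h x) := by
  set H : ℝ → ℝ := fun u => ∫ x in (0 : ℝ)..u, h x
  have hH : ∀ u, HasDerivAt H (h u) u := fun u => (hh.integral_hasStrictDerivAt 0 u).hasDerivAt
  have hu : ∀ u, HasDerivAt (fun u => Real.exp (-H u) * y u)
      (Real.exp (-H u) * -h u * y u + Real.exp (-H u) * deriv y u) u :=
    fun u => ((hH u).neg.exp).mul (hy u).hasDerivAt
  have hconst := constant_of_has_deriv_right_zero (a := 0) (b := t)
    (fun u _ => (hu u).continuousAt.continuousWithinAt) (fun u hu' => by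
      have := (hu u).hasDerivWithinAt (s := Ici u)
      rwa [hder u hu'.1, mul_neg, neg_mul, neg_add_eq_zero.2 (by ring)] at this)
    t ⟨ht, le_rfl⟩
  simp only [H, intervalIntegral.integral_same, neg_zero, Real.exp_zero, one_mul] at hconst
  rw [← hconst, mul_comm, ← mul_assoc, ← Real.exp_add, add_neg_cancel, Real.exp_zero, one_mul]

theorem pos_of_deriv_eq_mul {y h : ℝ → ℝ} (hy : Differentiable ℝ y) (hh : Continuous h)
    (hder : ∀ t ≥ 0, deriv y t = h t * y t) (h0 : 0 < y 0) {t : ℝ} (ht : 0 ≤ t) :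
    0 < y t := by
  rw [eq_mul_exp_integral_of_deriv_eq_mul hy hh hder ht]
  exact mul_pos h0 (Real.exp_pos _)

section

variable {K p : ℝ} {s : ℝ → ℝ} (hs : Differentiable ℝ s)
  (hode : ∀ t ≥ 0, deriv s t = K * s t * (1 - s t) * (s t - p))
include hs hode

theorem pos_of_replicator (h0 : 0 < s 0) {t : ℝ} (ht : 0 ≤ t) : 0 < s t :=
  pos_of_deriv_eq_mul (h := fun t => K * (1 - s t) * (s t - p)) hs
    (by have := hs.continuous; fun_prop) (fun t ht => by rw [hode t ht]; ring) h0 ht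

theorem lt_of_replicator (h0 : s 0 < p) {t : ℝ} (ht : 0 ≤ t) : s t < p := by
  refine sub_pos.1 (pos_of_deriv_eq_mul (y := fun t => p - s t)
    (h := fun t => K * s t * (1 - s t)) (by fun_prop) (by have := hs.continuous; fun_prop)
    (fun t ht => by rw [deriv_const_sub, hode t ht]; ring) (sub_pos.2 h0) ht)

theorem strictAntiOn_of_replicator (hK : 0 < K) (hp : p ≤ 1) (h0 : s 0 ∈ Ioo 0 p) :
    StrictAntiOn s (Ici 0) := by
  refine strictAntiOn_of_deriv_neg (convex_Ici 0) hs.continuous.continuousOn fun t ht => ?_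
  rw [interior_Ici] at ht
  have hpos := pos_of_replicator hs hode h0.1 ht.le
  have hlt := lt_of_replicator hs hode h0.2 ht.le
  rw [hode t ht.le]
  exact mul_neg_of_pos_of_neg (by have := mul_pos hK hpos; nlinarith) (by linarith)

theorem tendsto_zero_of_replicator (hK : 0 < K) (hp : p ≤ 1) (h0 : s 0 ∈ Ioo 0 p) :
    Tendsto s atTop (𝓝 0) := by
  have hanti := strictAntiOn_of_replicator hs hode hK hp h0
  obtain ⟨hpos0, hlt0⟩ := h0
  refine tendsto_order.2 ⟨fun a ha => eventually_atTop.2 ⟨0, fun t ht =>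
    ha.trans (pos_of_replicator hs hode hpos0 ht)⟩, fun ε hε => ?_⟩
  suffices ∃ T ≥ 0, s T < ε by
    obtain ⟨T, hT, hsT⟩ := this
    exact eventually_atTop.2
      ⟨T, fun t ht => (hanti.antitoneOn hT (hT.trans ht) ht).trans_lt hsT⟩
  by_contra! hge
  set δ := K * ε * (1 - s 0) * (p - s 0)
  have hδ : 0 < δ :=
    mul_pos (mul_pos (mul_pos hK hε) (by linarith)) (by linarith)
  have hder : ∀ t ∈ interior (Ici (0 : ℝ)), deriv s t ≤ -δ := by
    intro t ht
    rw [interior_Ici] at ht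
    have hεt := hge t ht.le
    have hts := hanti.antitoneOn self_mem_Ici (mem_Ici.2 ht.le) ht.le
    have hlt := lt_of_replicator hs hode hlt0 ht.le
    have hKst := mul_pos hK (pos_of_replicator hs hode hpos0 ht.le)
    rw [hode t ht.le, le_neg, ← mul_neg, neg_sub]
    show K * ε * (1 - s 0) * (p - s 0) ≤ _
    gcongr <;> nlinarith
  have hT : 0 ≤ s 0 / δ := div_nonneg hpos0.le hδ.le
  have := (convex_Ici 0).image_sub_le_mul_sub_of_deriv_le hs.continuous.continuousOn
    hs.differentiableOn hder 0 self_mem_Ici _ hT hT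
  rw [sub_zero, neg_mul, mul_div_cancel₀ _ hδ.ne'] at this
  linarith [hge _ hT]

end

theorem stmt_13 (a b c d : ℝ) (hac : a > c) (hdb : d > b)
    (s : ℝ → ℝ) (hs : Differentiable ℝ s)
    (hode : ∀ t ≥ (0 : ℝ), deriv s t =
      s t * (1 - s t) * ((a - c) * s t + (b - d) * (1 - s t)))
    (h0 : s 0 ∈ Set.Ioo (0 : ℝ) 1)
    (sstar : ℝ) (hsstar : sstar = (d - b) / ((a - c) + (d - b)))
    (hinit : s 0 < sstar) :
    sstar ∈ Set.Ioo (0 : ℝ) 1 ∧ Filter.Tendsto s Filter.atTop (nhds 0) := by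
  have hK : 0 < (a - c) + (d - b) := by linarith
  have hsstar_mem : sstar ∈ Ioo (0 : ℝ) 1 := by
    rw [hsstar]
    exact ⟨div_pos (by linarith) hK, (div_lt_one hK).2 (by linarith)⟩
  have hode' : ∀ t ≥ 0,
      deriv s t = ((a - c) + (d - b)) * s t * (1 - s t) * (s t - sstar) := by
    intro t ht
    rw [hode t ht, hsstar]
    field_simp
    ring
  exact ⟨hsstar_mem, tendsto_zero_of_replicator hs hode' hK hsstar_mem.2.le ⟨h0.1, hinit⟩⟩
end

section
/- Suppose a < c and d < b (mixed strategy dominant / hawk–dove case), and let s* = (d − b)/((a − c) + (d − b)), which lies in (0,1). Then s(t) → s* as t → ∞; that is, the interior evolutionarily stable mixed equilibrium attracts every interior solution. -/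
/-!
Writing `k = (c - a) + (b - d) > 0` and `s* = (b - d) / k`, the replicator equation reads
`s' = k s (1 - s) (s* - s)`. Levels `m < min (s 0) s*` and `M > max (s 0) s*` inside `(0, 1)` are
barriers the solution cannot cross, since the vector field points inward there. On `[m, M]` we
have `s (1 - s) ≥ m (1 - M)`, so the Lyapunov function `(s - s*)²` satisfies
`((s - s*)²)' ≤ -2 k m (1 - M) (s - s*)²` and decays exponentially by Grönwall's inequality.
-/

open Set Filter Topology Real

section Fencing

variable {F s : ℝ → ℝ}

theorem le_of_deriv_eq_comp_of_neg (hs : Differentiable ℝ s)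
    (hode : ∀ t ≥ 0, deriv s t = F (s t)) {M : ℝ} (hM : F M < 0) (h0 : s 0 ≤ M) :
    ∀ t ≥ 0, s t ≤ M := fun t ht =>
  image_le_of_deriv_right_lt_deriv_boundary' (B := fun _ => M) (B' := 0)
    hs.continuous.continuousOn
    (fun x _ => (hs x).hasDerivAt.hasDerivWithinAt) h0 continuousOn_const
    (fun _ _ => hasDerivWithinAt_const _ _ _)
    (fun x hx hsx => by simpa [hode x hx.1, hsx] using hM) ⟨ht, le_rfl⟩

theorem ge_of_deriv_eq_comp_of_pos (hs : Differentiable ℝ s)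
    (hode : ∀ t ≥ 0, deriv s t = F (s t)) {m : ℝ} (hm : 0 < F m) (h0 : m ≤ s 0) :
    ∀ t ≥ 0, m ≤ s t := fun t ht =>
  image_le_of_deriv_right_lt_deriv_boundary' (f := fun _ => m) (f' := 0)
    continuousOn_const (fun _ _ => hasDerivWithinAt_const _ _ _) h0
    hs.continuous.continuousOn (fun x _ => (hs x).hasDerivAt.hasDerivWithinAt)
    (fun x hx hsx => by simpa [hode x hx.1, ← hsx] using hm) ⟨ht, le_rfl⟩

end Fencing

theorem le_mul_exp_of_deriv_le_mul {f : ℝ → ℝ} (hf : Differentiable ℝ f) {K : ℝ}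
    (h : ∀ t ≥ 0, deriv f t ≤ K * f t) : ∀ t ≥ 0, f t ≤ f 0 * exp (K * t) := by
  intro t ht
  have := le_gronwallBound_of_liminf_deriv_right_le (f' := deriv f) (ε := 0) (b := t)
    hf.continuous.continuousOn
    (fun x _ _ hr => (hf x).hasDerivAt.hasDerivWithinAt.liminf_right_slope_le hr) le_rfl
    (fun x hx => by simpa using h x hx.1) t ⟨ht, le_rfl⟩
  simpa [gronwallBound_ε0] using this

theorem tendsto_zero_of_deriv_le_neg_mul {f : ℝ → ℝ} (hf : Differentiable ℝ f)
    (hf0 : ∀ t, 0 ≤ f t) {K : ℝ} (hK : 0 < K) (h : ∀ t ≥ 0, deriv f t ≤ -K * f t) :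
    Tendsto f atTop (𝓝 0) := by
  have hexp : Tendsto (fun t => f 0 * exp (-K * t)) atTop (𝓝 0) := by
    simpa using (tendsto_exp_atBot.comp
      (tendsto_id.const_mul_atTop_of_neg (neg_neg_of_pos hK))).const_mul (f 0)
  exact tendsto_of_tendsto_of_tendsto_of_le_of_le' tendsto_const_nhds hexp
    (Eventually.of_forall hf0)
    ((eventually_ge_atTop 0).mono (le_mul_exp_of_deriv_le_mul hf h))

theorem tendsto_of_deriv_eq_mul_mul_sub {k p : ℝ} (hk : 0 < k) (hp : p ∈ Ioo 0 1)
    {s : ℝ → ℝ} (hs : Differentiable ℝ s)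
    (hode : ∀ t ≥ 0, deriv s t = k * (s t * (1 - s t) * (p - s t)))
    (h0 : s 0 ∈ Ioo 0 1) : Tendsto s atTop (𝓝 p) := by
  obtain ⟨m, hm, hms, hmp⟩ : ∃ m, 0 < m ∧ m ≤ s 0 ∧ m < p :=
    ⟨min (s 0) p / 2, by positivity [h0.1, hp.1],
      by linarith [min_le_left (s 0) p, h0.1], by linarith [min_le_right (s 0) p, hp.1]⟩
  obtain ⟨M, hM, hsM, hpM⟩ : ∃ M, M < 1 ∧ s 0 ≤ M ∧ p < M :=
    ⟨(max (s 0) p + 1) / 2, by linarith [max_lt h0.2 hp.2],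
      by linarith [le_max_left (s 0) p, h0.2], by linarith [le_max_right (s 0) p, hp.2]⟩
  have hs_ge : ∀ t ≥ 0, m ≤ s t :=
    ge_of_deriv_eq_comp_of_pos (F := fun y => k * (y * (1 - y) * (p - y))) hs hode
      (mul_pos hk (mul_pos (mul_pos hm (by linarith)) (by linarith))) hms
  have hs_le : ∀ t ≥ 0, s t ≤ M :=
    le_of_deriv_eq_comp_of_neg (F := fun y => k * (y * (1 - y) * (p - y))) hs hode
      (mul_neg_of_pos_of_neg hk (mul_neg_of_pos_of_neg
        (mul_pos (by linarith) (by linarith)) (by linarith))) hsM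
  have hV : ∀ t, HasDerivAt (fun t => (s t - p) ^ 2) (2 * (s t - p) * deriv s t) t := fun t => by
    simpa using ((hs t).hasDerivAt.sub_const p).fun_pow 2
  have hdecay : ∀ t ≥ 0, deriv (fun t => (s t - p) ^ 2) t
      ≤ -(2 * k * (m * (1 - M))) * (s t - p) ^ 2 := by
    intro t ht
    have hmM : m * (1 - M) ≤ s t * (1 - s t) := by
      nlinarith [hs_ge t ht, hs_le t ht]
    rw [(hV t).deriv, hode t ht]
    nlinarith [mul_le_mul_of_nonneg_left hmM (mul_nonneg hk.le (sq_nonneg (s t - p)))]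
  have hV0 := tendsto_zero_of_deriv_le_neg_mul (fun t => (hV t).differentiableAt)
    (fun t => sq_nonneg (s t - p)) (mul_pos (mul_pos two_pos hk) (mul_pos hm (sub_pos.2 hM)))
    hdecay
  have habs : Tendsto (fun t => |s t - p|) atTop (𝓝 0) := by
    simpa [sqrt_sq_eq_abs] using hV0.sqrt
  exact tendsto_sub_nhds_zero_iff.1 ((tendsto_zero_iff_abs_tendsto_zero _).2 habs)

theorem div_add_mem_Ioo_of_neg {x y : ℝ} (hx : x < 0) (hy : y < 0) : x / (y + x) ∈ Ioo 0 1 :=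
  ⟨div_pos_of_neg_of_neg hx (by linarith), (div_lt_one_of_neg (by linarith)).2 (by linarith)⟩

theorem stmt_14 (a b c d : ℝ) (hac : a < c) (hdb : d < b)
    (s : ℝ → ℝ) (hs : Differentiable ℝ s)
    (hode : ∀ t ≥ (0 : ℝ), deriv s t =
      s t * (1 - s t) * ((a - c) * s t + (b - d) * (1 - s t)))
    (h0 : s 0 ∈ Set.Ioo (0 : ℝ) 1)
    (sstar : ℝ) (hsstar : sstar = (d - b) / ((a - c) + (d - b))) :
    sstar ∈ Set.Ioo (0 : ℝ) 1 ∧ Filter.Tendsto s Filter.atTop (nhds sstar) := by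
  have hstar : sstar ∈ Ioo 0 1 := hsstar ▸ div_add_mem_Ioo_of_neg (by linarith) (by linarith)
  have hk : 0 < (c - a) + (b - d) := by linarith
  refine ⟨hstar, tendsto_of_deriv_eq_mul_mul_sub hk hstar hs (fun t ht => ?_) h0⟩
  have hgain : ∀ y, (a - c) * y + (b - d) * (1 - y) = ((c - a) + (b - d)) * (sstar - y) := by
    intro y
    have hden : (a - c) + (d - b) ≠ 0 := by linarith
    rw [hsstar]
    field_simp
    ring
  rw [hode t ht, hgain]
  ring
end

section
/- Let q > 0 and let B₁, B₂, σ₁, σ₂ be real numbers such that −B₁ − σ₁²/2 > 0, −B₂ − σ₂²/2 < 0, and (−B₁ − σ₁²/2) > |−B₂ − σ₂²/2| (the instability of x = 0 in environment 1 is strictly stronger than its stability in environment 2). Then there exist α ∈ (0,1) and real numbers c₁, c₂ with 1 + αc₁ > 0 and 1 + αc₂ > 0 such that −B₁ + ((−α − 1)/2)·σ₁² + q·(c₁ − c₂)/(1 + αc₁) > 0 and −B₂ + ((−α − 1)/2)·σ₂² + q·(c₂ − c₁)/(1 + αc₂) > 0; that is, Assumption (ii) for instability of the vertex x = 0 holds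 for the two-state switched dynamic with equal transition rates q₁₂ = q₂₁ = q. -/
/-!
Write `Lᵢ = -Bᵢ - σᵢ²/2`. At `α = 0` the two inequalities of Assumption (ii) become
`L₁ - q (c₂ - c₁) > 0` and `L₂ + q (c₂ - c₁) > 0`, which `q (c₂ - c₁) = (L₁ - L₂) / 2` satisfies
with common margin `(L₁ + L₂) / 2 > 0`. All conditions are continuous in `α` at `0`, so they
persist for small `α > 0`.
-/

open Filter Topology

lemma eventually_assumption_ii_of_pos (q B σ cᵢ cⱼ : ℝ)
    (h : 0 < -B - σ ^ 2 / 2 + q * (cᵢ - cⱼ)) :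
    ∀ᶠ α in 𝓝 (0 : ℝ), 1 + α * cᵢ > 0 ∧
      -B + ((-α - 1) / 2) * σ ^ 2 + q * (cᵢ - cⱼ) / (1 + α * cᵢ) > 0 := by
  have hden : ContinuousAt (fun α : ℝ => 1 + α * cᵢ) 0 := by fun_prop
  have hlhs : ContinuousAt
      (fun α : ℝ => -B + ((-α - 1) / 2) * σ ^ 2 + q * (cᵢ - cⱼ) / (1 + α * cᵢ)) 0 :=
    (continuousAt_const.add (by fun_prop)).add
      (continuousAt_const.div hden (by simp))
  refine (hden.eventually (lt_mem_nhds (?_ : (0 : ℝ) < _))).and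
    (hlhs.eventually (lt_mem_nhds (?_ : (0 : ℝ) < _)))
  · simp
  · convert h using 1
    simp only [zero_mul, add_zero, div_one]
    ring

theorem stmt_18_general (q B₁ B₂ σ₁ σ₂ : ℝ) (hq : 0 < q)
    (h₃ : -B₁ - σ₁ ^ 2 / 2 > |-B₂ - σ₂ ^ 2 / 2|) :
    ∃ α ∈ Set.Ioo (0 : ℝ) 1, ∃ c₁ c₂ : ℝ,
      1 + α * c₁ > 0 ∧ 1 + α * c₂ > 0 ∧
      -B₁ + ((-α - 1) / 2) * σ₁ ^ 2 + q * (c₁ - c₂) / (1 + α * c₁) > 0 ∧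
      -B₂ + ((-α - 1) / 2) * σ₂ ^ 2 + q * (c₂ - c₁) / (1 + α * c₂) > 0 := by
  set L₁ := -B₁ - σ₁ ^ 2 / 2 with hL₁
  set L₂ := -B₂ - σ₂ ^ 2 / 2 with hL₂
  have hsum : 0 < L₁ + L₂ := by linarith [neg_abs_le L₂]
  set c := (L₁ - L₂) / (2 * q)
  have hqc : q * c = (L₁ - L₂) / 2 := by simp only [c]; field_simp
  have h₁ := eventually_assumption_ii_of_pos q B₁ σ₁ 0 c (by linarith)
  have h₂ := eventually_assumption_ii_of_pos q B₂ σ₂ c 0 (by linarith)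
  obtain ⟨α, ⟨⟨-, hα₁⟩, ⟨hc, hα₂⟩⟩, hα⟩ :=
    (((h₁.and h₂).filter_mono nhdsWithin_le_nhds).and (Ioo_mem_nhdsGT zero_lt_one)).exists
  exact ⟨α, hα, 0, c, by simp, hc, hα₁, hα₂⟩

theorem stmt_18 (q B₁ B₂ σ₁ σ₂ : ℝ) (hq : 0 < q)
    (h₁ : -B₁ - σ₁ ^ 2 / 2 > 0) (h₂ : -B₂ - σ₂ ^ 2 / 2 < 0)
    (h₃ : -B₁ - σ₁ ^ 2 / 2 > |-B₂ - σ₂ ^ 2 / 2|) :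
    ∃ α ∈ Set.Ioo (0 : ℝ) 1, ∃ c₁ c₂ : ℝ,
      1 + α * c₁ > 0 ∧ 1 + α * c₂ > 0 ∧
      -B₁ + ((-α - 1) / 2) * σ₁ ^ 2 + q * (c₁ - c₂) / (1 + α * c₁) > 0 ∧
      -B₂ + ((-α - 1) / 2) * σ₂ ^ 2 + q * (c₂ - c₁) / (1 + α * c₂) > 0 :=
  stmt_18_general q B₁ B₂ σ₁ σ₂ hq h₃
end
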